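/- arXiv:2107.13606 — 2 statements merged into one kernel-verified Lean document; each statement's English description precedes it below -/
import Mathlib

section
/- Fix $\delta>0$, $\lambda>0$ and an integer $j\geq 1$, and let $C_\delta = \frac{K_j(\sqrt{\lambda}\delta)}{I_j(\sqrt{\lambda}\delta)}$. Define for $0<\varepsilon<\delta$ $$\sigma(\varepsilon) = \frac{\sqrt{\lambda}\big(C_\delta I_j'(\sqrt{\lambda}\varepsilon)-K_j'(\sqrt{\lambda}\varepsilon)\big)}{K_j(\sqrt{\lambda}\varepsilon)-C_\delta I_j(\sqrt{\lambda}\varepsilon)}.$$ Then $\lim_{\varepsilon\to 0^+}\varepsilon\,\sigma(\varepsilon)=j$. -/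
open MeasureTheory Filter Real Topology

/-- Modified Bessel function of the first kind (integral representation). -/
noncomputable def besselI (ν x : ℝ) : ℝ :=
  (1 / π) * ∫ θ in (0:ℝ)..π, Real.exp (x * Real.cos θ) * Real.cos (ν * θ)
    - (Real.sin (ν * π) / π) * ∫ t in Set.Ioi (0:ℝ), Real.exp (-(x * Real.cosh t) - ν * t)

/-- Modified Bessel function of the second kind (integral representation). -/
noncomputable def besselK (ν x : ℝ) : ℝ :=
  ∫ t in Set.Ioi (0:ℝ), Real.exp (-(x * Real.cosh t)) * Real.cosh (ν * t)

/-!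
Put `x = √λ ε`. Differentiating under the integral sign and integrating by parts gives the
recurrence `K_ν' = -K_{ν-1} - (ν / x) K_ν`, so `x K_ν' / K_ν = -ν - x K_{ν-1} / K_ν`; since
`0 ≤ K_{ν-1} ≤ K_ν` for `ν ≥ 1/2`, this tends to `-ν`. As `K_ν` blows up at `0` while `I_j` and
`I_j'` stay bounded, dividing numerator and denominator of `ε σ(ε)` by `K_j(x)` kills every term
carrying `C`, whatever its value, and leaves `-x K_j'(x) / K_j(x) → j`.
-/

open Set

namespace Real

lemma cosh_le_exp_abs (y : ℝ) : cosh y ≤ exp |y| := by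
  rw [← cosh_abs, ← cosh_add_sinh]
  exact le_add_of_nonneg_right (sinh_nonneg_iff.2 (abs_nonneg y))

lemma abs_sinh_le_cosh (y : ℝ) : |sinh y| ≤ cosh y := by
  rw [abs_sinh, ← cosh_abs]
  exact (sinh_lt_cosh _).le

lemma cosh_mul_le_exp_abs_mul (ν : ℝ) {t : ℝ} (ht : 0 ≤ t) : cosh (ν * t) ≤ exp (|ν| * t) := by
  simpa [abs_mul, abs_of_nonneg ht] using cosh_le_exp_abs (ν * t)

end Real

variable {x : ℝ}

lemma tendsto_mul_sub_mul_cosh_atBot (a : ℝ) (hx : 0 < x) :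
    Tendsto (fun t => a * t - x * cosh t) atTop atBot := by
  have hexp : Tendsto (fun t => a + -(x / 2 * (exp t / t))) atTop atBot := by
    refine tendsto_atBot_add_const_left _ a (tendsto_neg_atTop_atBot.comp ?_)
    exact (by simpa using tendsto_exp_div_pow_atTop 1 : Tendsto (fun t => exp t / t) atTop atTop)
      |>.const_mul_atTop (half_pos hx)
  refine tendsto_atBot_mono' _ ?_ (tendsto_id.atTop_mul_atBot₀ hexp)
  filter_upwards [eventually_gt_atTop 0] with t ht
  have hcosh : exp t / 2 ≤ cosh t := by rw [cosh_eq]; linarith [exp_pos (-t)]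
  have hid : id t * (a + -(x / 2 * (exp t / t))) = a * t - x * (exp t / 2) := by
    simp only [id]; field_simp; ring
  rw [hid]
  gcongr

lemma tendsto_exp_mul_mul_exp_neg_mul_cosh (a : ℝ) (hx : 0 < x) :
    Tendsto (fun t => exp (a * t) * exp (-(x * cosh t))) atTop (𝓝 0) := by
  simpa only [← exp_add, ← sub_eq_add_neg, Function.comp_def] using
    tendsto_exp_atBot.comp (tendsto_mul_sub_mul_cosh_atBot a hx)

lemma integrableOn_Ioi_of_abs_le_exp_mul_mul_exp_neg_mul_cosh {f : ℝ → ℝ} (hf : Continuous f)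
    (a : ℝ) (hx : 0 < x) (hbound : ∀ t, 0 ≤ t → |f t| ≤ exp (a * t) * exp (-(x * cosh t))) :
    IntegrableOn f (Ioi 0) := by
  refine integrable_of_isBigO_exp_neg one_pos hf.continuousOn (Asymptotics.IsBigO.of_bound 1 ?_)
  filter_upwards [eventually_ge_atTop 0,
    (tendsto_exp_mul_mul_exp_neg_mul_cosh (a + 1) hx).eventually (ge_mem_nhds one_pos)]
    with t ht hdecay
  calc ‖f t‖ ≤ exp (a * t) * exp (-(x * cosh t)) := hbound t ht
    _ = exp ((a + 1) * t) * exp (-(x * cosh t)) * exp (-1 * t) := by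
        simp only [← exp_add]; ring_nf
    _ ≤ 1 * ‖exp (-1 * t)‖ := by
        rw [norm_of_nonneg (exp_pos _).le]; gcongr

lemma integrableOn_exp_neg_mul_cosh_mul_cosh (ν : ℝ) (hx : 0 < x) :
    IntegrableOn (fun t => exp (-(x * cosh t)) * cosh (ν * t)) (Ioi 0) := by
  refine integrableOn_Ioi_of_abs_le_exp_mul_mul_exp_neg_mul_cosh (by fun_prop) |ν| hx
    fun t ht => ?_
  rw [abs_of_pos (by positivity), mul_comm]
  gcongr
  exact cosh_mul_le_exp_abs_mul ν ht

lemma integrableOn_exp_neg_mul_cosh_mul_cosh_mul_cosh (ν : ℝ) (hx : 0 < x) :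
    IntegrableOn (fun t => exp (-(x * cosh t)) * (cosh t * cosh (ν * t))) (Ioi 0) := by
  refine integrableOn_Ioi_of_abs_le_exp_mul_mul_exp_neg_mul_cosh (by fun_prop) (1 + |ν|) hx
    fun t ht => ?_
  rw [abs_of_pos (by positivity), mul_comm, add_mul, exp_add]
  gcongr
  · simpa using cosh_mul_le_exp_abs_mul 1 ht
  · exact cosh_mul_le_exp_abs_mul ν ht

lemma integrableOn_exp_neg_mul_cosh_mul_sinh_mul_sinh (ν : ℝ) (hx : 0 < x) :
    IntegrableOn (fun t => exp (-(x * cosh t)) * (sinh t * sinh (ν * t))) (Ioi 0) := by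
  refine integrableOn_Ioi_of_abs_le_exp_mul_mul_exp_neg_mul_cosh (by fun_prop) (1 + |ν|) hx
    fun t ht => ?_
  rw [abs_mul, abs_mul, abs_of_pos (exp_pos _), mul_comm, add_mul, exp_add]
  gcongr
  · exact (abs_sinh_le_cosh t).trans (by simpa using cosh_mul_le_exp_abs_mul 1 ht)
  · exact (abs_sinh_le_cosh _).trans (cosh_mul_le_exp_abs_mul ν ht)

lemma besselK_nonneg (ν x : ℝ) : 0 ≤ besselK ν x :=
  setIntegral_nonneg measurableSet_Ioi fun _ _ => by positivity

lemma mul_exp_neg_mul_cosh_le_besselK (ν : ℝ) (hx : 0 < x) {T : ℝ} (hT : 0 ≤ T) :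
    T * exp (-(x * cosh T)) ≤ besselK ν x := by
  have hint := integrableOn_exp_neg_mul_cosh_mul_cosh ν hx
  calc T * exp (-(x * cosh T)) = ∫ _ in Ioo 0 T, exp (-(x * cosh T)) := by
        simp [hT]
    _ ≤ ∫ t in Ioo 0 T, exp (-(x * cosh t)) * cosh (ν * t) := by
        refine setIntegral_mono_on (integrableOn_const measure_Ioo_lt_top.ne)
          (hint.mono_set Ioo_subset_Ioi_self) measurableSet_Ioo fun t ht => ?_
        have hcosh : cosh t ≤ cosh T := by
          rw [cosh_le_cosh, abs_of_pos ht.1, abs_of_nonneg hT]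
          exact ht.2.le
        calc exp (-(x * cosh T)) ≤ exp (-(x * cosh t)) := by gcongr
          _ ≤ exp (-(x * cosh t)) * cosh (ν * t) := le_mul_of_one_le_right (by positivity)
              (one_le_cosh _)
    _ ≤ besselK ν x :=
        setIntegral_mono_set hint (.of_forall fun t => by positivity)
          Ioo_subset_Ioi_self.eventuallyLE

lemma tendsto_besselK_nhdsGT_zero (ν : ℝ) : Tendsto (besselK ν) (𝓝[>] 0) atTop := by
  refine tendsto_atTop.2 fun M => ?_
  have hT : 0 ≤ |M| + 1 := by positivity
  have hlim : Tendsto (fun x => (|M| + 1) * exp (-(x * cosh (|M| + 1)))) (𝓝[>] 0)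
      (𝓝 (|M| + 1)) := by
    have hcont : Continuous fun x => (|M| + 1) * exp (-(x * cosh (|M| + 1))) := by fun_prop
    simpa using (hcont.tendsto 0).mono_left nhdsWithin_le_nhds
  filter_upwards [hlim.eventually (lt_mem_nhds ((le_abs_self M).trans_lt (lt_add_one _))),
    self_mem_nhdsWithin] with x hM hx
  exact hM.le.trans (mul_exp_neg_mul_cosh_le_besselK ν hx hT)

lemma besselK_sub_one_le {ν : ℝ} (hν : 1 / 2 ≤ ν) (hx : 0 < x) :
    besselK (ν - 1) x ≤ besselK ν x := by
  refine setIntegral_mono_on (integrableOn_exp_neg_mul_cosh_mul_cosh _ hx)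
    (integrableOn_exp_neg_mul_cosh_mul_cosh _ hx) measurableSet_Ioi fun t _ => ?_
  gcongr
  rw [cosh_le_cosh, abs_mul, abs_mul]
  refine mul_le_mul_of_nonneg_right ?_ (abs_nonneg t)
  rw [abs_le, abs_of_nonneg (by linarith)]
  constructor <;> linarith

lemma hasDerivAt_besselK_integral (ν : ℝ) (hx : 0 < x) :
    HasDerivAt (besselK ν)
      (-∫ t in Ioi 0, exp (-(x * cosh t)) * (cosh t * cosh (ν * t))) x := by
  have hderiv := hasDerivAt_integral_of_dominated_loc_of_deriv_le
    (μ := volume.restrict (Ioi 0)) (x₀ := x)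
    (F := fun y t => exp (-(y * cosh t)) * cosh (ν * t))
    (F' := fun y t => -(exp (-(y * cosh t)) * (cosh t * cosh (ν * t))))
    (bound := fun t => exp (-(x / 2 * cosh t)) * (cosh t * cosh (ν * t)))
    (Metric.ball_mem_nhds x (half_pos hx))
    (.of_forall fun _ => (Continuous.aestronglyMeasurable (by fun_prop)).restrict)
    (integrableOn_exp_neg_mul_cosh_mul_cosh ν hx)
    (Continuous.aestronglyMeasurable (by fun_prop)).restrict ?bound
    (integrableOn_exp_neg_mul_cosh_mul_cosh_mul_cosh ν (half_pos hx)) ?hasDeriv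
  · rw [← integral_neg]
    exact hderiv.2
  case bound =>
    refine .of_forall fun t y hy => ?_
    have hxy : x / 2 ≤ y := by
      rw [Metric.mem_ball, Real.dist_eq, abs_lt] at hy
      linarith
    rw [norm_neg, norm_of_nonneg (by positivity)]
    gcongr
  case hasDeriv =>
    refine .of_forall fun t y _ => ?_
    have hlin : HasDerivAt (fun y => -(y * cosh t)) (-cosh t) y := by
      simpa using ((hasDerivAt_id y).mul_const (cosh t)).fun_neg
    exact (hlin.exp.mul_const (cosh (ν * t))).congr_deriv (by ring)

lemma mul_besselK_eq_integral_sinh_mul_sinh (ν : ℝ) (hx : 0 < x) :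
    ν * besselK ν x = x * ∫ t in Ioi 0, exp (-(x * cosh t)) * (sinh t * sinh (ν * t)) := by
  set f : ℝ → ℝ := fun t => exp (-(x * cosh t)) * sinh (ν * t)
  set f' : ℝ → ℝ := fun t => ν * (exp (-(x * cosh t)) * cosh (ν * t))
      - x * (exp (-(x * cosh t)) * (sinh t * sinh (ν * t)))
  have hf : ∀ t, HasDerivAt f (f' t) t := fun t => by
    have hexp := ((hasDerivAt_cosh t).const_mul x).fun_neg.exp
    have hsinh : HasDerivAt (fun t => sinh (ν * t)) (cosh (ν * t) * ν) t := by
      simpa using ((hasDerivAt_id t).const_mul ν).sinh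
    exact (hexp.mul hsinh).congr_deriv (by simp only [f']; ring)
  have hf'_int : IntegrableOn f' (Ioi 0) :=
    ((integrableOn_exp_neg_mul_cosh_mul_cosh ν hx).const_mul ν).sub
      ((integrableOn_exp_neg_mul_cosh_mul_sinh_mul_sinh ν hx).const_mul x)
  have hf_top : Tendsto f atTop (𝓝 0) := by
    refine squeeze_zero_norm' ?_ (tendsto_exp_mul_mul_exp_neg_mul_cosh |ν| hx)
    filter_upwards [eventually_ge_atTop 0] with t ht
    rw [norm_mul, norm_of_nonneg (exp_pos _).le, mul_comm, Real.norm_eq_abs]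
    gcongr
    exact (abs_sinh_le_cosh _).trans (cosh_mul_le_exp_abs_mul ν ht)
  have hftc := integral_Ioi_of_hasDerivAt_of_tendsto (hf 0).continuousAt.continuousWithinAt
    (fun t _ => hf t) hf'_int hf_top
  rw [integral_sub ((integrableOn_exp_neg_mul_cosh_mul_cosh ν hx).const_mul ν)
    ((integrableOn_exp_neg_mul_cosh_mul_sinh_mul_sinh ν hx).const_mul x), integral_const_mul,
    integral_const_mul] at hftc
  simp only [f, mul_zero, sinh_zero, sub_zero] at hftc
  exact sub_eq_zero.1 hftc

theorem hasDerivAt_besselK (ν : ℝ) (hx : 0 < x) :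
    HasDerivAt (besselK ν) (-besselK (ν - 1) x - ν / x * besselK ν x) x := by
  have hsplit : ∫ t in Ioi 0, exp (-(x * cosh t)) * (cosh t * cosh (ν * t))
      = (∫ t in Ioi 0, exp (-(x * cosh t)) * (sinh t * sinh (ν * t))) + besselK (ν - 1) x := by
    rw [besselK, ← integral_add (integrableOn_exp_neg_mul_cosh_mul_sinh_mul_sinh ν hx)
      (integrableOn_exp_neg_mul_cosh_mul_cosh _ hx)]
    refine setIntegral_congr_fun measurableSet_Ioi fun t _ => ?_
    rw [sub_mul, one_mul, cosh_sub]
    ring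
  have hibp : ν / x * besselK ν x
      = ∫ t in Ioi 0, exp (-(x * cosh t)) * (sinh t * sinh (ν * t)) := by
    rw [div_mul_eq_mul_div, mul_besselK_eq_integral_sinh_mul_sinh ν hx,
      mul_div_cancel_left₀ _ hx.ne']
  convert hasDerivAt_besselK_integral ν hx using 1
  rw [hsplit, hibp]
  ring

theorem tendsto_mul_deriv_besselK_div_besselK {ν : ℝ} (hν : 1 / 2 ≤ ν) :
    Tendsto (fun x => x * deriv (besselK ν) x / besselK ν x) (𝓝[>] 0) (𝓝 (-ν)) := by
  have hK_pos : ∀ᶠ x in 𝓝[>] 0, 0 < besselK ν x :=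
    (tendsto_besselK_nhdsGT_zero ν).eventually_gt_atTop 0
  have hratio : Tendsto (fun x => x * (besselK (ν - 1) x / besselK ν x)) (𝓝[>] 0) (𝓝 0) := by
    refine squeeze_zero' ?_ ?_ (tendsto_id.mono_left nhdsWithin_le_nhds)
    · filter_upwards [self_mem_nhdsWithin, hK_pos] with x (hx : 0 < x) hK
      exact mul_nonneg hx.le (div_nonneg (besselK_nonneg _ _) hK.le)
    · filter_upwards [self_mem_nhdsWithin, hK_pos] with x (hx : 0 < x) hK
      exact mul_le_of_le_one_right hx.le ((div_le_one hK).2 (besselK_sub_one_le hν hx))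
  have hlim := (hratio.const_add ν).neg
  rw [add_zero] at hlim
  refine hlim.congr' ?_
  filter_upwards [self_mem_nhdsWithin, hK_pos] with x (hx : 0 < x) hK
  rw [(hasDerivAt_besselK ν hx).deriv]
  have hx0 : x ≠ 0 := hx.ne'
  field_simp
  ring

theorem tendsto_mul_deriv_sub_div_besselK_sub {ν : ℝ} (hν : 1 / 2 ≤ ν) (C : ℝ) {f : ℝ → ℝ}
    (hf : ContinuousAt f 0) (hf' : ContinuousAt (deriv f) 0) :
    Tendsto (fun x => x * (C * deriv f x - deriv (besselK ν) x) / (besselK ν x - C * f x))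
      (𝓝[>] 0) (𝓝 ν) := by
  have hK := tendsto_besselK_nhdsGT_zero ν
  have hf_div : Tendsto (fun x => f x / besselK ν x) (𝓝[>] 0) (𝓝 0) :=
    (hf.tendsto.mono_left nhdsWithin_le_nhds).div_atTop hK
  have hf'_div : Tendsto (fun x => x * deriv f x / besselK ν x) (𝓝[>] 0) (𝓝 0) := by
    have hxf' : Tendsto (fun x => x * deriv f x) (𝓝[>] 0) (𝓝 0) := by
      simpa using (tendsto_id.mono_left nhdsWithin_le_nhds).mul
        (hf'.tendsto.mono_left nhdsWithin_le_nhds)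
    exact hxf'.div_atTop hK
  have hnum := (hf'_div.const_mul C).sub (tendsto_mul_deriv_besselK_div_besselK hν)
  have hden := (tendsto_const_nhds (x := (1 : ℝ))).sub (hf_div.const_mul C)
  have hlim := hnum.div hden (by simp)
  simp only [mul_zero, zero_sub, neg_neg, sub_zero, div_one] at hlim
  refine hlim.congr' ?_
  filter_upwards [hK.eventually_gt_atTop 0] with x hKx
  simp only [Pi.div_apply]
  rw [← div_div_div_cancel_right₀ hKx.ne' (x * (C * deriv f x - deriv (besselK ν) x))]
  congr 1 <;> field_simp

lemma besselI_natCast (j : ℕ) :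
    besselI j = fun y => π⁻¹ * ∫ θ in 0..π, exp (y * cos θ) * cos (j * θ) := by
  funext y
  simp [besselI, sin_nat_mul_pi]

lemma hasDerivAt_besselI_natCast (j : ℕ) (y : ℝ) :
    HasDerivAt (besselI j) (π⁻¹ * ∫ θ in 0..π, cos θ * (exp (y * cos θ) * cos (j * θ))) y := by
  rw [besselI_natCast]
  refine HasDerivAt.const_mul _ (intervalIntegral.hasDerivAt_integral_of_dominated_loc_of_deriv_le
    (F := fun y θ => exp (y * cos θ) * cos (j * θ))
    (F' := fun y θ => cos θ * (exp (y * cos θ) * cos (j * θ)))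
    (bound := fun _ => exp (|y| + 1)) (Metric.ball_mem_nhds y one_pos)
    (.of_forall fun _ => (Continuous.aestronglyMeasurable (by fun_prop)).restrict)
    (Continuous.intervalIntegrable (by fun_prop) 0 π)
    (Continuous.aestronglyMeasurable (by fun_prop)).restrict ?bound intervalIntegrable_const
    ?hasDeriv).2
  case bound =>
    refine .of_forall fun θ _ u hu => ?_
    have hu' : |u| ≤ |y| + 1 := by
      rw [Metric.mem_ball, Real.dist_eq] at hu
      linarith [abs_sub_abs_le_abs_sub u y]
    have hexp : u * cos θ ≤ |y| + 1 :=
      calc u * cos θ ≤ |u| * |cos θ| := (le_abs_self _).trans (abs_mul _ _).le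
        _ ≤ |y| + 1 := (mul_le_of_le_one_right (abs_nonneg _) (abs_cos_le_one θ)).trans hu'
    rw [norm_mul, norm_mul, norm_of_nonneg (exp_pos _).le]
    calc ‖cos θ‖ * (exp (u * cos θ) * ‖cos (j * θ)‖) ≤ 1 * (exp (|y| + 1) * 1) := by
          gcongr
          · exact abs_cos_le_one θ
          · exact abs_cos_le_one _
      _ = exp (|y| + 1) := by ring
  case hasDeriv =>
    refine .of_forall fun θ _ u _ => ?_
    have hlin : HasDerivAt (fun u => u * cos θ) (cos θ) u := by
      simpa using (hasDerivAt_id u).mul_const (cos θ)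
    exact (hlin.exp.mul_const (cos (j * θ))).congr_deriv (by ring)

lemma continuous_deriv_besselI_natCast (j : ℕ) : Continuous (deriv (besselI j)) := by
  rw [funext fun y => (hasDerivAt_besselI_natCast j y).deriv]
  exact continuous_const.mul
    (intervalIntegral.continuous_parametric_intervalIntegral_of_continuous' (by fun_prop) _ _)

theorem stmt13_general (lam : ℝ) (hlam : 0 < lam) (j : ℕ) (hj : 1 ≤ j)
    (C : ℝ) :
    Tendsto (fun ε : ℝ =>
        ε * (Real.sqrt lam *
            (C * deriv (fun y => besselI j y) (Real.sqrt lam * ε)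
              - deriv (fun y => besselK j y) (Real.sqrt lam * ε)) /
          (besselK j (Real.sqrt lam * ε) - C * besselI j (Real.sqrt lam * ε))))
      (𝓝[>] 0) (𝓝 (j : ℝ)) := by
  have hsqrt : 0 < √lam := sqrt_pos.2 hlam
  have hj' : (1 / 2 : ℝ) ≤ j := le_trans (by norm_num) (Nat.one_le_cast.2 hj)
  have hI : Differentiable ℝ (besselI j) := fun y => (hasDerivAt_besselI_natCast j y).differentiableAt
  have hlim := tendsto_mul_deriv_sub_div_besselK_sub hj' C hI.continuous.continuousAt
    (continuous_deriv_besselI_natCast j).continuousAt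
  have hscale : Tendsto (√lam * ·) (𝓝[>] 0) (𝓝[>] 0) :=
    tendsto_iff_comap.2 (comap_mulLeft_nhdsGT_zero hsqrt).ge
  refine (hlim.comp hscale).congr fun ε => ?_
  simp only [Function.comp_apply]
  ring

theorem stmt13 (δ lam : ℝ) (hδ : 0 < δ) (hlam : 0 < lam) (j : ℕ) (hj : 1 ≤ j)
    (C : ℝ) (hC : C = besselK j (Real.sqrt lam * δ) / besselI j (Real.sqrt lam * δ)) :
    Tendsto (fun ε : ℝ =>
        ε * (Real.sqrt lam *
            (C * deriv (fun y => besselI j y) (Real.sqrt lam * ε)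
              - deriv (fun y => besselK j y) (Real.sqrt lam * ε)) /
          (besselK j (Real.sqrt lam * ε) - C * besselI j (Real.sqrt lam * ε))))
      (𝓝[>] 0) (𝓝 (j : ℝ)) :=
  stmt13_general lam hlam j hj C
end

section
/- Fix $\delta>0$ and $\lambda>0$, and let $C_\delta=\frac{K_0(\sqrt{\lambda}\delta)}{I_0(\sqrt{\lambda}\delta)}$. Define for $0<\varepsilon<\delta$ $$\sigma(\varepsilon)=\frac{\sqrt{\lambda}\big(C_\delta I_1(\sqrt{\lambda}\varepsilon)+K_1(\sqrt{\lambda}\varepsilon)\big)}{K_0(\sqrt{\lambda}\varepsilon)-C_\delta I_0(\sqrt{\lambda}\varepsilon)}.$$ Then $\lim_{\varepsilon\to 0^+}\varepsilon\,|\log\varepsilon|\,\sigma(\varepsilon)=1$. -/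
/-!
As `x → 0⁺` we have `x K₁(x) → 1` and `K₀(x) = -log x + O(1)`, while `I₀` and `I₁` stay bounded;
with `x = √λ ε` the numerator of `ε |log ε| σ(ε)` therefore tends to `1` and its denominator is
asymptotic to `|log ε|`. The Bessel estimates come from the integral representations:
`t ↦ x cosh t e^{-x sinh t}` is an exact derivative with integral `1` over `(0, ∞)`, and since
`sinh t ≤ cosh t ≤ sinh t + 1` it squeezes `x K₁(x)` between `e^{-x}` and `1`. For `K₀(x)` one
splits at `T = -log x`: below `T` the integrand is between `1 - x eᵗ` and `1`, above `T` it is at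
most `2 x cosh t e^{-x cosh t}`, whose integral is at most `2 x K₁(x) ≤ 2`.
-/

open MeasureTheory Filter Real Topology

open Set Asymptotics

theorem Asymptotics.isEquivalent_of_sub_isBigO_one {α β : Type*} [NormedAddCommGroup β]
    {l : Filter α} {u v : α → β} (h : (u - v) =O[l] fun _ => (1 : ℝ))
    (hv : Tendsto (fun x => ‖v x‖) l atTop) : u ~[l] v :=
  h.trans_isLittleO ((isLittleO_one_left_iff ℝ).2 hv)

lemma besselK_zero_eq_integral (x : ℝ) :
    besselK 0 x = ∫ t in Ioi (0:ℝ), exp (-(x * cosh t)) := by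
  simp [besselK]

lemma besselK_one_eq_integral (x : ℝ) :
    besselK 1 x = ∫ t in Ioi (0:ℝ), exp (-(x * cosh t)) * cosh t := by
  simp [besselK]

lemma besselI_intCast_eq_integral (n : ℤ) (x : ℝ) :
    besselI n x = π⁻¹ * ∫ θ in (0:ℝ)..π, exp (x * cos θ) * cos (n * θ) := by
  simp [besselI, sin_int_mul_pi]

lemma abs_besselI_intCast_le (n : ℤ) (x : ℝ) : |besselI n x| ≤ exp |x| := by
  have hbound : ∀ θ ∈ uIoc (0:ℝ) π, ‖exp (x * cos θ) * cos (n * θ)‖ ≤ exp |x| := by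
    intro θ _
    rw [norm_mul, norm_of_nonneg (exp_pos _).le, norm_eq_abs]
    have hcos := abs_cos_le_one (n * θ)
    have hexp : exp (x * cos θ) ≤ exp |x| :=
      exp_le_exp.2 ((le_abs_self _).trans (by
        rw [abs_mul]; exact mul_le_of_le_one_right (abs_nonneg x) (abs_cos_le_one θ)))
    nlinarith [exp_pos (x * cos θ)]
  have := intervalIntegral.norm_integral_le_of_norm_le_const hbound
  rw [sub_zero, abs_of_pos pi_pos, norm_eq_abs] at this
  rw [besselI_intCast_eq_integral, abs_mul, abs_inv, abs_of_pos pi_pos, inv_mul_le_iff₀ pi_pos]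
  linarith

lemma besselI_intCast_isBigO_one (n : ℤ) : (fun x => besselI n x) =O[𝓝 0] fun _ => (1:ℝ) := by
  have hexp : Tendsto (fun x : ℝ => exp |x|) (𝓝 0) (𝓝 1) := by
    simpa using (continuous_abs.rexp.tendsto 0)
  refine (IsBigO.of_bound 1 (Eventually.of_forall fun x => ?_)).trans (hexp.isBigO_one ℝ)
  rw [norm_eq_abs, one_mul, norm_of_nonneg (exp_pos _).le]
  exact abs_besselI_intCast_le n x

section HyperbolicIntegrals

variable {x : ℝ}

lemma hasDerivAt_neg_exp_neg_mul_sinh (x t : ℝ) :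
    HasDerivAt (fun t => -exp (-(x * sinh t))) (x * cosh t * exp (-(x * sinh t))) t := by
  have h : HasDerivAt (fun t => -(x * sinh t)) (-(x * cosh t)) t :=
    ((hasDerivAt_sinh t).const_mul x).neg
  exact (h.exp.neg).congr_deriv (by ring)

lemma tendsto_neg_exp_neg_mul_sinh_atTop (hx : 0 < x) :
    Tendsto (fun t => -exp (-(x * sinh t))) atTop (𝓝 0) := by
  have hsinh : Tendsto sinh atTop atTop := tendsto_atTop_mono'
    _ ((eventually_ge_atTop 0).mono fun t ht => self_le_sinh_iff.2 ht) tendsto_id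
  simpa using (tendsto_exp_atBot.comp (tendsto_neg_atTop_atBot.comp
    (hsinh.const_mul_atTop hx))).neg

lemma integrableOn_mul_cosh_mul_exp_neg_mul_sinh (hx : 0 < x) :
    IntegrableOn (fun t => x * cosh t * exp (-(x * sinh t))) (Ioi 0) :=
  integrableOn_Ioi_deriv_of_nonneg' (fun t _ => hasDerivAt_neg_exp_neg_mul_sinh x t)
    (fun t _ => by positivity) (tendsto_neg_exp_neg_mul_sinh_atTop hx)

lemma integral_mul_cosh_mul_exp_neg_mul_sinh (hx : 0 < x) :
    ∫ t in Ioi (0:ℝ), x * cosh t * exp (-(x * sinh t)) = 1 := by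
  rw [integral_Ioi_of_hasDerivAt_of_nonneg' (fun t _ => hasDerivAt_neg_exp_neg_mul_sinh x t)
    (fun t _ => by positivity) (tendsto_neg_exp_neg_mul_sinh_atTop hx)]
  simp

lemma exp_neg_mul_cosh_le_exp_neg_mul_sinh (hx : 0 ≤ x) (t : ℝ) :
    exp (-(x * cosh t)) ≤ exp (-(x * sinh t)) :=
  exp_le_exp.2 (neg_le_neg (mul_le_mul_of_nonneg_left (sinh_lt_cosh t).le hx))

lemma exp_neg_mul_exp_neg_mul_sinh_le_exp_neg_mul_cosh (hx : 0 ≤ x) {t : ℝ} (ht : 0 ≤ t) :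
    exp (-x) * exp (-(x * sinh t)) ≤ exp (-(x * cosh t)) := by
  have : cosh t ≤ sinh t + 1 := by
    linarith [cosh_sub_sinh t, exp_le_one_iff.2 (neg_nonpos.2 ht)]
  rw [← exp_add]
  exact exp_le_exp.2 (by nlinarith)

lemma integrableOn_mul_cosh_mul_exp_neg_mul_cosh (hx : 0 < x) :
    IntegrableOn (fun t => x * cosh t * exp (-(x * cosh t))) (Ioi 0) := by
  refine (integrableOn_mul_cosh_mul_exp_neg_mul_sinh hx).mono' (by fun_prop) ?_
  filter_upwards [] with t
  rw [norm_of_nonneg (by positivity)]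
  exact mul_le_mul_of_nonneg_left (exp_neg_mul_cosh_le_exp_neg_mul_sinh hx.le t) (by positivity)

lemma integrableOn_exp_neg_mul_cosh (hx : 0 < x) :
    IntegrableOn (fun t => exp (-(x * cosh t))) (Ioi 0) := by
  refine ((integrableOn_mul_cosh_mul_exp_neg_mul_cosh hx).const_mul x⁻¹).mono' (by fun_prop) ?_
  filter_upwards [] with t
  rw [norm_of_nonneg (exp_pos _).le, ← mul_assoc, ← mul_assoc, inv_mul_cancel₀ hx.ne', one_mul]
  exact le_mul_of_one_le_left (exp_pos _).le (one_le_cosh t)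

lemma mul_besselK_one_eq_integral (x : ℝ) :
    x * besselK 1 x = ∫ t in Ioi (0:ℝ), x * cosh t * exp (-(x * cosh t)) := by
  rw [besselK_one_eq_integral, ← integral_const_mul]
  simp only [mul_comm, mul_assoc]

lemma mul_besselK_one_le_one (hx : 0 < x) : x * besselK 1 x ≤ 1 := by
  rw [mul_besselK_one_eq_integral, ← integral_mul_cosh_mul_exp_neg_mul_sinh hx]
  refine setIntegral_mono_on (integrableOn_mul_cosh_mul_exp_neg_mul_cosh hx)
    (integrableOn_mul_cosh_mul_exp_neg_mul_sinh hx) measurableSet_Ioi fun t _ => ?_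
  exact mul_le_mul_of_nonneg_left (exp_neg_mul_cosh_le_exp_neg_mul_sinh hx.le t) (by positivity)

lemma exp_neg_le_mul_besselK_one (hx : 0 < x) : exp (-x) ≤ x * besselK 1 x := by
  rw [mul_besselK_one_eq_integral, ← mul_one (exp (-x)),
    ← integral_mul_cosh_mul_exp_neg_mul_sinh hx, ← integral_const_mul]
  refine setIntegral_mono_on ((integrableOn_mul_cosh_mul_exp_neg_mul_sinh hx).const_mul _)
    (integrableOn_mul_cosh_mul_exp_neg_mul_cosh hx) measurableSet_Ioi fun t ht => ?_
  rw [mul_left_comm]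
  exact mul_le_mul_of_nonneg_left
    (exp_neg_mul_exp_neg_mul_sinh_le_exp_neg_mul_cosh hx.le (le_of_lt ht)) (by positivity)

lemma tendsto_mul_besselK_one : Tendsto (fun x => x * besselK 1 x) (𝓝[>] 0) (𝓝 1) := by
  have hexp : Tendsto (fun x : ℝ => exp (-x)) (𝓝[>] 0) (𝓝 1) := by
    simpa using (continuous_neg.rexp.tendsto 0).mono_left nhdsWithin_le_nhds
  refine tendsto_of_tendsto_of_tendsto_of_le_of_le' hexp tendsto_const_nhds ?_ ?_ <;>
    filter_upwards [self_mem_nhdsWithin] with x hx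
  exacts [exp_neg_le_mul_besselK_one hx, mul_besselK_one_le_one hx]

end HyperbolicIntegrals

section BesselKZero

variable {x : ℝ}

lemma neg_log_sub_one_le_besselK_zero (hx : 0 < x) (hx1 : x < 1) :
    -log x - 1 ≤ besselK 0 x := by
  set T := -log x with hTdef
  have hT : 0 ≤ T := (neg_pos.2 (log_neg hx hx1)).le
  have hexpT : exp T = x⁻¹ := by rw [hTdef, exp_neg, exp_log hx]
  have hlin : ∫ t in Ioc 0 T, (1 - x * exp t) = T - (1 - x) := by
    rw [← intervalIntegral.integral_of_le hT, intervalIntegral.integral_sub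
      intervalIntegrable_const (intervalIntegral.intervalIntegrable_exp.const_mul x),
      intervalIntegral.integral_const_mul, integral_exp, hexpT, exp_zero,
      mul_sub, mul_inv_cancel₀ hx.ne']
    simp
  have hpoint : ∀ t ∈ Ioc 0 T, 1 - x * exp t ≤ exp (-(x * cosh t)) := fun t ht => by
    have hcosh : cosh t ≤ exp t := by
      rw [cosh_eq]; linarith [exp_le_exp.2 (neg_le_self ht.1.le)]
    nlinarith [add_one_le_exp (-(x * cosh t))]
  calc -log x - 1 ≤ T - (1 - x) := by linarith
    _ = ∫ t in Ioc 0 T, (1 - x * exp t) := hlin.symm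
    _ ≤ ∫ t in Ioc 0 T, exp (-(x * cosh t)) :=
      setIntegral_mono_on (by fun_prop : Continuous _).integrableOn_Ioc ((integrableOn_exp_neg_mul_cosh hx).mono_set
        Ioc_subset_Ioi_self) measurableSet_Ioc hpoint
    _ ≤ ∫ t in Ioi 0, exp (-(x * cosh t)) :=
      setIntegral_mono_set (integrableOn_exp_neg_mul_cosh hx)
        (Eventually.of_forall fun t => (exp_pos _).le) (Eventually.of_forall Ioc_subset_Ioi_self)
    _ = besselK 0 x := (besselK_zero_eq_integral x).symm

lemma besselK_zero_le_neg_log_add_two (hx : 0 < x) (hx1 : x < 1) :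
    besselK 0 x ≤ -log x + 2 := by
  set T := -log x with hTdef
  have hT : 0 ≤ T := (neg_pos.2 (log_neg hx hx1)).le
  have hexpT : exp T = x⁻¹ := by rw [hTdef, exp_neg, exp_log hx]
  have hK0 := integrableOn_exp_neg_mul_cosh hx
  have hK1 : IntegrableOn (fun t => 2 * (x * cosh t * exp (-(x * cosh t)))) (Ioi 0) :=
    (integrableOn_mul_cosh_mul_exp_neg_mul_cosh hx).const_mul 2
  have hsplit : ∫ t in Ioi 0, exp (-(x * cosh t))
      = (∫ t in Ioc 0 T, exp (-(x * cosh t))) + ∫ t in Ioi T, exp (-(x * cosh t)) := by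
    rw [← setIntegral_union (Ioc_disjoint_Ioi le_rfl) measurableSet_Ioi
      (hK0.mono_set Ioc_subset_Ioi_self) (hK0.mono_set (Ioi_subset_Ioi hT)),
      Ioc_union_Ioi_eq_Ioi hT]
  have hnear : ∫ t in Ioc 0 T, exp (-(x * cosh t)) ≤ T := by
    calc ∫ t in Ioc 0 T, exp (-(x * cosh t)) ≤ ∫ _ in Ioc 0 T, (1:ℝ) :=
          setIntegral_mono_on (hK0.mono_set Ioc_subset_Ioi_self) (by simp)
            measurableSet_Ioc fun t _ => exp_le_one_iff.2 (by nlinarith [cosh_pos t])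
      _ = T := by simp [hT]
  have hpoint : ∀ t ∈ Ioi T,
      exp (-(x * cosh t)) ≤ 2 * (x * cosh t * exp (-(x * cosh t))) := fun t ht => by
    have hcosh : exp t ≤ 2 * cosh t := by rw [cosh_eq]; linarith [exp_pos (-t)]
    have hexp : x⁻¹ ≤ exp t := hexpT ▸ exp_le_exp.2 (le_of_lt ht)
    have : 1 ≤ 2 * (x * cosh t) := by
      have := mul_le_mul_of_nonneg_left (hexp.trans hcosh) hx.le
      rw [mul_inv_cancel₀ hx.ne'] at this
      linarith
    nlinarith [exp_pos (-(x * cosh t))]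
  have hfar : ∫ t in Ioi T, exp (-(x * cosh t)) ≤ 2 := by
    calc ∫ t in Ioi T, exp (-(x * cosh t))
        ≤ ∫ t in Ioi T, 2 * (x * cosh t * exp (-(x * cosh t))) :=
          setIntegral_mono_on (hK0.mono_set (Ioi_subset_Ioi hT))
            (hK1.mono_set (Ioi_subset_Ioi hT)) measurableSet_Ioi hpoint
      _ ≤ ∫ t in Ioi 0, 2 * (x * cosh t * exp (-(x * cosh t))) :=
          setIntegral_mono_set hK1 (Eventually.of_forall fun t => by positivity)
            (Eventually.of_forall fun t ht => lt_of_le_of_lt hT ht)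
      _ = 2 * (x * besselK 1 x) := by rw [integral_const_mul, mul_besselK_one_eq_integral]
      _ ≤ 2 := by linarith [mul_besselK_one_le_one hx]
  rw [besselK_zero_eq_integral, hsplit]
  linarith

lemma besselK_zero_add_log_isBigO_one :
    (fun x => besselK 0 x + log x) =O[𝓝[>] 0] fun _ => (1:ℝ) := by
  refine IsBigO.of_bound 2 ?_
  filter_upwards [Ioo_mem_nhdsGT one_pos] with x hx
  rw [norm_one, mul_one, norm_eq_abs, abs_le]
  constructor <;>
    linarith [neg_log_sub_one_le_besselK_zero hx.1 hx.2, besselK_zero_le_neg_log_add_two hx.1 hx.2]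

end BesselKZero

lemma tendsto_mul_besselI_intCast (n : ℤ) : Tendsto (fun x => x * besselI n x) (𝓝 0) (𝓝 0) :=
  ((isBigO_refl (fun x : ℝ => x) _).mul (besselI_intCast_isBigO_one n)).trans_tendsto
    (by simp only [mul_one]; exact tendsto_id)

lemma tendsto_mul_const_mul_besselI_one_add_besselK_one (C : ℝ) :
    Tendsto (fun x => x * (C * besselI 1 x + besselK 1 x)) (𝓝[>] 0) (𝓝 1) := by
  have hI1 : Tendsto (fun x => x * besselI 1 x) (𝓝[>] 0) (𝓝 0) := by
    exact_mod_cast (tendsto_mul_besselI_intCast 1).mono_left nhdsWithin_le_nhds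
  simpa [mul_add, mul_left_comm] using (hI1.const_mul C).add tendsto_mul_besselK_one

lemma tendsto_abs_log_nhdsGT_zero : Tendsto (fun ε => |log ε|) (𝓝[>] 0) atTop :=
  tendsto_abs_atBot_atTop.comp tendsto_log_nhdsGT_zero

lemma besselK_zero_sub_const_mul_besselI_zero_isEquivalent (C : ℝ) :
    (fun x => besselK 0 x - C * besselI 0 x) ~[𝓝[>] 0] fun x => -log x := by
  refine isEquivalent_of_sub_isBigO_one ?_ ?_
  · have hI0 : (fun x => besselI 0 x) =O[𝓝[>] 0] fun _ => (1:ℝ) := by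
      exact_mod_cast (besselI_intCast_isBigO_one 0).mono nhdsWithin_le_nhds
    refine (besselK_zero_add_log_isBigO_one.sub (hI0.const_mul_left C)).congr_left fun x => ?_
    simp only [Pi.sub_apply]
    ring
  · simpa using tendsto_abs_log_nhdsGT_zero

lemma tendsto_const_mul_nhdsGT_zero {c : ℝ} (hc : 0 < c) :
    Tendsto (fun ε : ℝ => c * ε) (𝓝[>] 0) (𝓝[>] 0) := by
  refine tendsto_nhdsWithin_of_tendsto_nhds_of_eventually_within _ ?_ ?_
  · simpa using ((continuous_const_mul c).tendsto 0).mono_left nhdsWithin_le_nhds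
  · filter_upwards [self_mem_nhdsWithin] with ε hε using mul_pos hc hε

lemma neg_log_const_mul_isEquivalent_abs_log {c : ℝ} (hc : 0 < c) :
    (fun ε => -log (c * ε)) ~[𝓝[>] 0] fun ε => |log ε| := by
  refine isEquivalent_of_sub_isBigO_one ((isBigO_const_one ℝ (-log c) _).congr' ?_ .rfl) ?_
  · filter_upwards [Ioo_mem_nhdsGT one_pos] with ε hε
    rw [Pi.sub_apply, abs_of_neg (log_neg hε.1 hε.2), log_mul hc.ne' hε.1.ne']
    ring
  · simpa using tendsto_abs_log_nhdsGT_zero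

theorem stmt14_general (lam : ℝ) (hlam : 0 < lam)
    (C : ℝ) :
    Tendsto (fun ε : ℝ =>
        ε * |Real.log ε| * (Real.sqrt lam *
            (C * besselI 1 (Real.sqrt lam * ε) + besselK 1 (Real.sqrt lam * ε)) /
          (besselK 0 (Real.sqrt lam * ε) - C * besselI 0 (Real.sqrt lam * ε))))
      (𝓝[>] 0) (𝓝 1) := by
  set S := √lam
  have hS0 : 0 < S := sqrt_pos.2 hlam
  have hS := tendsto_const_mul_nhdsGT_zero hS0
  have hnum := (tendsto_mul_const_mul_besselI_one_add_besselK_one C).comp hS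
  have hden := ((besselK_zero_sub_const_mul_besselI_zero_isEquivalent C).comp_tendsto hS).trans
    (neg_log_const_mul_isEquivalent_abs_log hS0)
  have hratio := (isEquivalent_iff_tendsto_one
    ((hden.symm.tendsto_atTop tendsto_abs_log_nhdsGT_zero).eventually_ne_atTop 0)).1 hden.symm
  have hlim := hnum.mul hratio
  rw [mul_one] at hlim
  refine hlim.congr fun ε => ?_
  simp only [Function.comp_apply, Pi.div_apply]
  ring

theorem stmt14 (δ lam : ℝ) (hδ : 0 < δ) (hlam : 0 < lam)
    (C : ℝ) (hC : C = besselK 0 (Real.sqrt lam * δ) / besselI 0 (Real.sqrt lam * δ)) :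
    Tendsto (fun ε : ℝ =>
        ε * |Real.log ε| * (Real.sqrt lam *
            (C * besselI 1 (Real.sqrt lam * ε) + besselK 1 (Real.sqrt lam * ε)) /
          (besselK 0 (Real.sqrt lam * ε) - C * besselI 0 (Real.sqrt lam * ε))))
      (𝓝[>] 0) (𝓝 1) :=
  stmt14_general lam hlam C
end
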